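/- arXiv:1810.11885 — 2 statements merged into one kernel-verified Lean document; each statement's English description precedes it below -/
import Mathlib

section
/- The SoV discrete system implies the quantum spectral curve: assume K is invertible, η ≠ 0, the ξ_a are pairwise distinct, and ξ_a − ξ_b ≠ kη for all a ≠ b and all nonzero integers k with |k| ≤ n. Let ᾱ be an eigenvalue of K and define α_0, …, α_n as in the context. Let x ∈ ℂ^N satisfy x_a · t_{n−1}^{(K,x)}(ξ_a − η) = t_n^{(K)}(ξ_a) for all a, and set t_m := t_m^{(K,x)} for 0 ≤ m ≤ n−1 and t_n := t_n^{(K)}. Let φ(λ) = ∏_{j=1}^M (λ − λ_j) be a polynomial with M ≤ N and λ_j ≠ ξ_a for all j, a, satisfying α_1(ξ_a) · φ(ξ_a − η) = x_a · φ(ξ_a) for every a ∈ {1,…,N}. Then the quantum spectral curve functional equation holds identically: Σ_{b=0}^n α_b(λ) · φ(λ − bη) · t_{n−b}(λ − bη) = 0 for all λ ∈ ℂ. -/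
open Matrix BigOperators

noncomputable section

namespace GLnSoV

/-- The permutation operator on `ℂ^n ⊗ ℂ^n`. -/
def permOp (n : ℕ) : Matrix (Fin n × Fin n) (Fin n × Fin n) ℂ :=
  Matrix.of fun p q => if p.1 = q.2 ∧ p.2 = q.1 then (1 : ℂ) else 0

/-- The rational `gl_n` R-matrix `R(λ) = λ·Id + η·P`. -/
def Rmat (n : ℕ) (η lam : ℂ) : Matrix (Fin n × Fin n) (Fin n × Fin n) ℂ :=
  lam • (1 : Matrix (Fin n × Fin n) (Fin n × Fin n) ℂ) + η • permOp n

/-- `R(λ)` acting on the `a`-th and `b`-th factors of a tensor product of copies of `ℂ^n`. -/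
def Rab (n : ℕ) (η : ℂ) {ι : Type} [Fintype ι] [DecidableEq ι] (a b : ι) (lam : ℂ) :
    Matrix (ι → Fin n) (ι → Fin n) ℂ :=
  Matrix.of fun x y =>
    Rmat n η lam (x a, x b) (y a, y b) *
      ∏ c ∈ Finset.univ.filter (fun c => c ≠ a ∧ c ≠ b), (if x c = y c then (1 : ℂ) else 0)

/-- `R(λ)` acting on the auxiliary space and the `j`-th site of the quantum space. -/
def Raux (n N : ℕ) (η : ℂ) (lam : ℂ) (j : Fin N) :
    Matrix (Fin n × (Fin N → Fin n)) (Fin n × (Fin N → Fin n)) ℂ :=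
  Matrix.of fun p q =>
    Rmat n η lam (p.1, p.2 j) (q.1, q.2 j) *
      ∏ c ∈ Finset.univ.filter (fun c => c ≠ j), (if p.2 c = q.2 c then (1 : ℂ) else 0)

/-- The twist matrix `K` acting on the auxiliary space. -/
def Kaux (n N : ℕ) (K : Matrix (Fin n) (Fin n) ℂ) :
    Matrix (Fin n × (Fin N → Fin n)) (Fin n × (Fin N → Fin n)) ℂ :=
  Matrix.of fun p q => K p.1 q.1 * (if p.2 = q.2 then (1 : ℂ) else 0)

/-- The twisted monodromy matrix `M^{(K)}(λ) = K_a R_{a,N}(λ-ξ_N) ⋯ R_{a,1}(λ-ξ_1)`. -/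
def monodromy (n N : ℕ) (η : ℂ) (ξ : Fin N → ℂ) (K : Matrix (Fin n) (Fin n) ℂ) (lam : ℂ) :
    Matrix (Fin n × (Fin N → Fin n)) (Fin n × (Fin N → Fin n)) ℂ :=
  Kaux n N K * (List.ofFn (fun j : Fin N => Raux n N η (lam - ξ j.rev) j.rev)).prod

/-- The operator permuting the tensor factors of `(ℂ^n)^{⊗m}` according to `π`. -/
def permTensorOp (n m : ℕ) (π : Equiv.Perm (Fin m)) :
    Matrix (Fin m → Fin n) (Fin m → Fin n) ℂ :=
  Matrix.of fun v w => if v = w ∘ π then (1 : ℂ) else 0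

/-- The antisymmetrizer `P⁻_{1…m}` on `(ℂ^n)^{⊗m}`. -/
def antisym (n m : ℕ) : Matrix (Fin m → Fin n) (Fin m → Fin n) ℂ :=
  (m.factorial : ℂ)⁻¹ •
    ∑ π : Equiv.Perm (Fin m), ((Equiv.Perm.sign π : ℤ) : ℂ) • permTensorOp n m π

/-- The monodromy matrix with the `j`-th copy of `(ℂ^n)^{⊗m}` as auxiliary space. -/
def MauxJ (n N : ℕ) (η : ℂ) (ξ : Fin N → ℂ) (K : Matrix (Fin n) (Fin n) ℂ) (m : ℕ)
    (j : Fin m) (lam : ℂ) :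
    Matrix ((Fin m → Fin n) × (Fin N → Fin n)) ((Fin m → Fin n) × (Fin N → Fin n)) ℂ :=
  Matrix.of fun p q =>
    monodromy n N η ξ K lam (p.1 j, p.2) (q.1 j, q.2) *
      ∏ c ∈ Finset.univ.filter (fun c => c ≠ j), (if p.1 c = q.1 c then (1 : ℂ) else 0)

/-- The antisymmetrizer tensored with the identity of the quantum space. -/
def antisymH (n N m : ℕ) :
    Matrix ((Fin m → Fin n) × (Fin N → Fin n)) ((Fin m → Fin n) × (Fin N → Fin n)) ℂ :=
  Matrix.of fun p q => antisym n m p.1 q.1 * (if p.2 = q.2 then (1 : ℂ) else 0)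

/-- The fused transfer matrix `T_m^{(K)}(λ)`, the trace over the `m` auxiliary copies of `ℂ^n`
of `P⁻_{1…m} M₁(λ) M₂(λ-η) ⋯ M_m(λ-(m-1)η)`. -/
def transfer (n N : ℕ) (η : ℂ) (ξ : Fin N → ℂ) (K : Matrix (Fin n) (Fin n) ℂ)
    (m : ℕ) (lam : ℂ) : Matrix (Fin N → Fin n) (Fin N → Fin n) ℂ :=
  Matrix.of fun x y =>
    ∑ v : Fin m → Fin n,
      (antisymH n N m *
        (List.ofFn (fun j : Fin m => MauxJ n N η ξ K m j (lam - (j : ℕ) * η))).prod)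
        (v, x) (v, y)

/-- `K ⊗ ⋯ ⊗ K` on `(ℂ^n)^{⊗m}`. -/
def Ktensor (n : ℕ) (K : Matrix (Fin n) (Fin n) ℂ) (m : ℕ) :
    Matrix (Fin m → Fin n) (Fin m → Fin n) ℂ :=
  Matrix.of fun v w => ∏ j, K (v j) (w j)

/-- The asymptotic coefficient `tr(P⁻_{1…m} K₁ ⋯ K_m)`. -/
def asymCoef (n : ℕ) (K : Matrix (Fin n) (Fin n) ℂ) (m : ℕ) : ℂ :=
  (antisym n m * Ktensor n K m).trace

/-- The scalar quantum determinant. -/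
def qdet (n N : ℕ) (η : ℂ) (ξ : Fin N → ℂ) (K : Matrix (Fin n) (Fin n) ℂ) (lam : ℂ) : ℂ :=
  K.det * ∏ b, ((lam - ξ b + η) * ∏ m ∈ Finset.Icc 1 (n - 1), (lam - ξ b - (m : ℂ) * η))

/-- The candidate eigenvalue function `t₁^{(K,x)}(λ)`. -/
def t1fun (n N : ℕ) (ξ : Fin N → ℂ) (K : Matrix (Fin n) (Fin n) ℂ) (x : Fin N → ℂ)
    (lam : ℂ) : ℂ :=
  K.trace * ∏ a, (lam - ξ a) +
    ∑ a, x a * ∏ b ∈ Finset.univ.erase a, (lam - ξ b) / (ξ a - ξ b)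

/-- The interpolation coefficients `g_a^{(m+1)}(λ)` (second argument is `m`). -/
def gfun (N : ℕ) (η : ℂ) (ξ : Fin N → ℂ) (m : ℕ) (a : Fin N) (lam : ℂ) : ℂ :=
  (∏ b ∈ Finset.univ.erase a, (lam - ξ b) / (ξ a - ξ b)) *
    ∏ b, ∏ r ∈ Finset.Icc 1 m, (ξ a - ξ b - (r : ℂ) * η)⁻¹

/-- The candidate eigenvalue functions `t_m^{(K,x)}(λ)`, defined recursively. -/
def tfun (n N : ℕ) (η : ℂ) (ξ : Fin N → ℂ) (K : Matrix (Fin n) (Fin n) ℂ)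
    (x : Fin N → ℂ) : ℕ → ℂ → ℂ
  | 0, _ => 1
  | 1, lam => t1fun n N ξ K x lam
  | m + 2, lam =>
      (∏ b, ∏ r ∈ Finset.Icc 1 (m + 1), (lam - ξ b - (r : ℂ) * η)) *
        (asymCoef n K (m + 2) * ∏ b, (lam - ξ b) +
          ∑ a, gfun N η ξ (m + 1) a lam * x a * tfun n N η ξ K x (m + 1) (ξ a - η))

/-- The SoV operator `∏_{a} (T₁^{(K)}(ξ_a))^{h_a}`. -/
def sovOp (n N : ℕ) (η : ℂ) (ξ : Fin N → ℂ) (K : Matrix (Fin n) (Fin n) ℂ)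
    (h : Fin N → Fin n) : Matrix (Fin N → Fin n) (Fin N → Fin n) ℂ :=
  (List.ofFn (fun a : Fin N => transfer n N η ξ K 1 (ξ a) ^ (h a : ℕ))).prod

/-- The SoV covector `⟨h| = ⟨S| ∏_a (T₁^{(K)}(ξ_a))^{h_a}`. -/
def sovCovector (n N : ℕ) (η : ℂ) (ξ : Fin N → ℂ) (K : Matrix (Fin n) (Fin n) ℂ)
    (S : (Fin N → Fin n) → ℂ) (h : Fin N → Fin n) : (Fin N → Fin n) → ℂ :=
  S ᵥ* sovOp n N η ξ K h

/-- The SoV basis hypothesis: the covectors `⟨h|` form a basis of the dual space. -/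
def sovBasisHyp (n N : ℕ) (η : ℂ) (ξ : Fin N → ℂ) (K : Matrix (Fin n) (Fin n) ℂ)
    (S : (Fin N → Fin n) → ℂ) : Prop :=
  ∃ B : Module.Basis (Fin N → Fin n) ℂ ((Fin N → Fin n) → ℂ),
    ∀ h, B h = sovCovector n N η ξ K S h

/-- The coefficient `α₁(λ) = ᾱ ∏_a (λ + η - ξ_a)`. -/
def alpha1 (N : ℕ) (η : ℂ) (ξ : Fin N → ℂ) (abar lam : ℂ) : ℂ :=
  abar * ∏ a, (lam + η - ξ a)

/-- The coefficients `α_b(λ)` of the quantum spectral curve. -/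
def alphaF (N : ℕ) (η : ℂ) (ξ : Fin N → ℂ) (abar : ℂ) : ℕ → ℂ → ℂ
  | 0, _ => -1
  | j + 1, lam =>
      (-1 : ℂ) ^ j * ∏ h ∈ Finset.range (j + 1), alpha1 N η ξ abar (lam - (h : ℂ) * η)

end GLnSoV

/-!
Every term of the spectral-curve sum is a polynomial in `λ`, so the sum is a polynomial of
degree at most `nN + M`. The leading coefficient of `t_m` is `tr (P⁻ K^{⊗m})`, the `m`-th sum
of principal minors of `K`, so the coefficient of `λ ^ (nN + M)` is `± det (ᾱ - K) = 0`.
The sum also vanishes at the `(n + 1) N` distinct points `ξ_a + (k - 1) η`, `0 ≤ k ≤ n`: at each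
of them all terms but two vanish by the zeros of `α_b` and of the `t_m`, and the remaining two
cancel by the fusion relation `t_{m+1}(ξ_a) = x_a t_m(ξ_a - η)`, the SoV system and the discrete
Baxter relation. Since `M ≤ N`, the sum is identically zero.
-/

section PolyOfDegLE

open Polynomial

/-- `c` is the coefficient of `X ^ d`, so `c = 0` says that the degree is `< d`. -/
def IsPolyOfDegLE {R : Type*} [CommRing R] (f : R → R) (d : ℕ) (c : R) : Prop :=
  ∃ p : R[X], p.natDegree ≤ d ∧ p.coeff d = c ∧ ∀ z, p.eval z = f z

namespace IsPolyOfDegLE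

variable {R : Type*} [CommRing R] {f g : R → R} {d e : ℕ} {c c' : R}

lemma congr (hf : IsPolyOfDegLE f d c) (h : ∀ z, f z = g z) : IsPolyOfDegLE g d c := by
  obtain ⟨p, hp, hc, hev⟩ := hf
  exact ⟨p, hp, hc, fun z => (hev z).trans (h z)⟩

lemma of_eq (hf : IsPolyOfDegLE f d c) (hd : d = e) (hc : c = c') : IsPolyOfDegLE f e c' :=
  hd ▸ hc ▸ hf

lemma zero : IsPolyOfDegLE (fun _ => (0 : R)) d 0 := ⟨0, by simp, by simp, by simp⟩

lemma const (c : R) : IsPolyOfDegLE (fun _ => c) 0 c := ⟨C c, by simp, by simp, by simp⟩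

lemma sub_const (a : R) : IsPolyOfDegLE (fun z => z - a) 1 1 :=
  ⟨X - C a, natDegree_X_sub_C_le a, by simp [coeff_X], by simp⟩

lemma add (hf : IsPolyOfDegLE f d c) (hg : IsPolyOfDegLE g d c') :
    IsPolyOfDegLE (fun z => f z + g z) d (c + c') := by
  obtain ⟨p, hp, hpc, hpe⟩ := hf
  obtain ⟨q, hq, hqc, hqe⟩ := hg
  exact ⟨p + q, (natDegree_add_le _ _).trans (max_le hp hq), by simp [hpc, hqc],
    by simp [hpe, hqe]⟩

lemma mul (hf : IsPolyOfDegLE f d c) (hg : IsPolyOfDegLE g e c') :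
    IsPolyOfDegLE (fun z => f z * g z) (d + e) (c * c') := by
  obtain ⟨p, hp, hpc, hpe⟩ := hf
  obtain ⟨q, hq, hqc, hqe⟩ := hg
  exact ⟨p * q, natDegree_mul_le.trans (add_le_add hp hq),
    by rw [coeff_mul_add_eq_of_natDegree_le hp hq, hpc, hqc], by simp [hpe, hqe]⟩

lemma const_mul (hf : IsPolyOfDegLE f d c) (a : R) :
    IsPolyOfDegLE (fun z => a * f z) d (a * c) := by
  simpa using (const a).mul hf

lemma mul_const (hf : IsPolyOfDegLE f d c) (a : R) :
    IsPolyOfDegLE (fun z => f z * a) d (c * a) := by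
  simpa using hf.mul (const a)

lemma of_lt (hf : IsPolyOfDegLE f d c) (h : d < e) : IsPolyOfDegLE f e 0 := by
  obtain ⟨p, hp, -, hpe⟩ := hf
  exact ⟨p, by omega, coeff_eq_zero_of_natDegree_lt (by omega), hpe⟩

lemma comp_sub (hf : IsPolyOfDegLE f d c) (s : R) :
    IsPolyOfDegLE (fun z => f (z - s)) d c := by
  obtain ⟨p, hp, hpc, hpe⟩ := hf
  refine ⟨taylor (-s) p, (natDegree_taylor p _).trans_le hp, ?_, fun z => by
    rw [taylor_eval, ← sub_eq_add_neg, hpe]⟩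
  rcases hp.lt_or_eq with hlt | rfl
  · rw [← hpc, coeff_eq_zero_of_natDegree_lt hlt,
      coeff_eq_zero_of_natDegree_lt (by rwa [natDegree_taylor])]
  · rw [coeff_taylor_natDegree, ← hpc, leadingCoeff]

lemma sum {ι : Type*} (s : Finset ι) {f : ι → R → R} {c : ι → R}
    (h : ∀ i ∈ s, IsPolyOfDegLE (f i) d (c i)) :
    IsPolyOfDegLE (fun z => ∑ i ∈ s, f i z) d (∑ i ∈ s, c i) := by
  classical
  induction s using Finset.induction_on with
  | empty => simpa using zero
  | insert i s hi ih =>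
    simp only [Finset.sum_insert hi]
    exact (h i (Finset.mem_insert_self i s)).add
      (ih fun j hj => h j (Finset.mem_insert_of_mem hj))

lemma prod {ι : Type*} (s : Finset ι) {f : ι → R → R} {d : ι → ℕ} {c : ι → R}
    (h : ∀ i ∈ s, IsPolyOfDegLE (f i) (d i) (c i)) :
    IsPolyOfDegLE (fun z => ∏ i ∈ s, f i z) (∑ i ∈ s, d i) (∏ i ∈ s, c i) := by
  classical
  induction s using Finset.induction_on with
  | empty => simpa using const (1 : R)
  | insert i s hi ih =>
    simp only [Finset.prod_insert hi, Finset.sum_insert hi]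
    exact (h i (Finset.mem_insert_self i s)).mul
      (ih fun j hj => h j (Finset.mem_insert_of_mem hj))

lemma prod_sub {ι : Type*} (s : Finset ι) (a : ι → R) :
    IsPolyOfDegLE (fun z => ∏ i ∈ s, (z - a i)) s.card 1 := by
  simpa using prod s (fun i _ => sub_const (a i))

lemma lagrange_basis {K ι : Type*} [Field K] [DecidableEq ι] (s : Finset ι) (ξ : ι → K)
    {i : ι} (hi : i ∈ s) :
    IsPolyOfDegLE (fun z => ∏ j ∈ s.erase i, (z - ξ j) / (ξ i - ξ j)) s.card 0 := by
  refine (prod (s.erase i) fun j _ =>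
    ((sub_const (ξ j)).mul_const (ξ i - ξ j)⁻¹).congr fun z => ?_).of_lt ?_
  · rw [div_eq_mul_inv]
  · simpa using Finset.card_erase_lt_of_mem hi

lemma eq_zero_of_injective [IsDomain R] (hf : IsPolyOfDegLE f d 0) {ι : Type*} [Fintype ι]
    {v : ι → R} (hv : Function.Injective v) (hcard : d ≤ Fintype.card ι)
    (hzero : ∀ i, f (v i) = 0) (z : R) : f z = 0 := by
  obtain ⟨p, hp, hpc, hpe⟩ := hf
  suffices p = 0 by rw [← hpe, this, eval_zero]
  by_contra hp0
  have hlt : p.natDegree < d :=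
    hp.lt_of_ne fun hd => hp0 (leadingCoeff_eq_zero.mp (by rw [leadingCoeff, hd, hpc]))
  exact hp0 (eq_zero_of_natDegree_lt_card_of_eval_eq_zero p hv (fun i => by rw [hpe, hzero])
    (hlt.trans_le hcard))

end IsPolyOfDegLE

end PolyOfDegLE

lemma Finset.prod_erase_div_sub_eq_ite {K ι : Type*} [Field K] [DecidableEq ι] {s : Finset ι}
    {ξ : ι → K} (hξ : Function.Injective ξ) (i : ι) {j : ι} (hj : j ∈ s) :
    ∏ k ∈ s.erase i, (ξ j - ξ k) / (ξ i - ξ k) = if i = j then 1 else 0 := by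
  split_ifs with hij
  · subst hij
    exact Finset.prod_eq_one fun k hk =>
      div_self (sub_ne_zero.mpr (hξ.ne (Finset.ne_of_mem_erase hk).symm))
  · exact Finset.prod_eq_zero (Finset.mem_erase.mpr ⟨Ne.symm hij, hj⟩) (by simp)

namespace Matrix

lemma det_submatrix_self_eq_zero_of_not_injective {R ι κ : Type*} [CommRing R] [Fintype κ]
    [DecidableEq κ] (M : Matrix ι ι R) {v : κ → ι} (hv : ¬ Function.Injective v) :
    (M.submatrix v v).det = 0 := by
  obtain ⟨a, b, hab, hne⟩ : ∃ a b, v a = v b ∧ a ≠ b := by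
    simpa [Function.Injective] using hv
  exact det_zero_of_row_eq hne (funext fun j => by simp [hab])

variable {R ι : Type*} [CommRing R] [Fintype ι] [DecidableEq ι]

def sumPrincipalMinors (M : Matrix ι ι R) (k : ℕ) : R :=
  ∑ s ∈ Finset.univ.powersetCard k, (M.submatrix (Subtype.val : s → ι) Subtype.val).det

lemma sumPrincipalMinors_zero (M : Matrix ι ι R) : M.sumPrincipalMinors 0 = 1 := by
  simp [sumPrincipalMinors]

lemma sumPrincipalMinors_one (M : Matrix ι ι R) : M.sumPrincipalMinors 1 = M.trace := by
  simp [sumPrincipalMinors, Finset.powersetCard_one, trace]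

lemma sumPrincipalMinors_card (M : Matrix ι ι R) :
    M.sumPrincipalMinors (Fintype.card ι) = M.det := by
  rw [sumPrincipalMinors, ← Finset.card_univ, Finset.powersetCard_self, Finset.sum_singleton]
  exact det_submatrix_equiv_self (Equiv.subtypeUnivEquiv Finset.mem_univ) M

lemma sum_neg_pow_mul_sumPrincipalMinors [Nontrivial R] (M : Matrix ι ι R) (μ : R) :
    ∑ b ∈ Finset.range (Fintype.card ι + 1),
        (-μ) ^ b * M.sumPrincipalMinors (Fintype.card ι - b) =
      (-1) ^ Fintype.card ι * M.charpoly.eval μ := by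
  rw [Polynomial.eval_eq_sum_range, M.charpoly_natDegree_eq_dim, Finset.mul_sum]
  refine Finset.sum_congr rfl fun b hb => ?_
  have hb : b ≤ Fintype.card ι := Nat.lt_succ_iff.mp (Finset.mem_range.mp hb)
  have hcoeff := M.charpoly_coeff_eq_sum_minors (Fintype.card ι - b) (Nat.sub_le _ _)
  rw [Nat.sub_sub_self hb, ← sumPrincipalMinors] at hcoeff
  have hsplit : (-1 : R) ^ Fintype.card ι = (-1) ^ (Fintype.card ι - b) * (-1) ^ b := by
    rw [← pow_add, Nat.sub_add_cancel hb]
  have hsq : ((-1 : R) ^ (Fintype.card ι - b)) ^ 2 = 1 := by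
    rw [← pow_mul, pow_mul', neg_one_sq, one_pow]
  rw [hcoeff, neg_pow, hsplit]
  linear_combination (-(-1) ^ b * μ ^ b * M.sumPrincipalMinors (Fintype.card ι - b)) * hsq

lemma sum_det_submatrix_of_image_eq (M : Matrix ι ι R) {m : ℕ} (s : Finset ι)
    (hs : s.card = m) :
    ∑ v : Fin m → ι with Finset.univ.image v = s, (M.submatrix v v).det =
      m.factorial * (M.submatrix (Subtype.val : s → ι) Subtype.val).det := by
  symm
  calc (m.factorial : R) * (M.submatrix (Subtype.val : s → ι) Subtype.val).det
      = ∑ e : Fin m ≃ s, (M.submatrix (Subtype.val : s → ι) Subtype.val).det := by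
        rw [Finset.sum_const, Finset.card_univ,
          Fintype.card_equiv (s.equivFinOfCardEq hs).symm, Fintype.card_fin, nsmul_eq_mul]
    _ = ∑ e : Fin m ≃ s, (M.submatrix (Subtype.val ∘ e) (Subtype.val ∘ e)).det :=
        Finset.sum_congr rfl fun e _ => (det_submatrix_equiv_self e _).symm
    _ = _ := by
      refine Finset.sum_bij (fun e _ => Subtype.val ∘ e) (fun e _ => ?_)
        (fun e₁ _ e₂ _ h => Equiv.ext fun j => Subtype.ext (congrFun h j)) (fun v hv => ?_)
        (fun _ _ => rfl)
      · simp only [Finset.mem_filter, Finset.mem_univ, true_and]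
        ext y
        simp only [Finset.mem_image, Finset.mem_univ, true_and, Function.comp_apply]
        exact ⟨fun ⟨j, hj⟩ => hj ▸ (e j).2, fun hy => ⟨e.symm ⟨y, hy⟩, by simp⟩⟩
      · have himage : Finset.univ.image v = s := (Finset.mem_filter.mp hv).2
        have hinj : Function.Injective v := by
          have := Finset.card_image_iff.mp (by rw [himage, hs, Finset.card_fin])
          simpa using this
        have hmem : ∀ j, v j ∈ s := fun j =>
          himage ▸ Finset.mem_image_of_mem v (Finset.mem_univ j)
        refine ⟨Equiv.ofBijective (fun j => ⟨v j, hmem j⟩) ?_, Finset.mem_univ _, rfl⟩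
        exact (Fintype.bijective_iff_injective_and_card _).mpr
          ⟨fun i j h => hinj (congrArg Subtype.val h), by simp [hs]⟩

lemma sum_det_submatrix_eq_factorial_mul (M : Matrix ι ι R) (m : ℕ) :
    ∑ v : Fin m → ι, (M.submatrix v v).det = m.factorial * M.sumPrincipalMinors m := by
  rw [← Finset.sum_fiberwise Finset.univ (fun v : Fin m → ι => Finset.univ.image v),
    sumPrincipalMinors, Finset.mul_sum, Finset.powersetCard_eq_filter, Finset.sum_filter,
    Finset.powerset_univ]
  refine Finset.sum_congr rfl fun s _ => ?_
  split_ifs with hs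
  · exact sum_det_submatrix_of_image_eq M s hs
  · refine Finset.sum_eq_zero fun v hv => M.det_submatrix_self_eq_zero_of_not_injective
      fun hinj => hs ?_
    rw [← (Finset.mem_filter.mp hv).2, Finset.card_image_of_injective _ hinj, Finset.card_univ,
      Fintype.card_fin]

end Matrix

namespace GLnSoV

open IsPolyOfDegLE

lemma trace_permTensorOp_mul_Ktensor (n m : ℕ) (K : Matrix (Fin n) (Fin n) ℂ)
    (π : Equiv.Perm (Fin m)) :
    (permTensorOp n m π * Ktensor n K m).trace =
      ∑ v : Fin m → Fin n, ∏ j, K (v (π⁻¹ j)) (v j) := by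
  refine Finset.sum_congr rfl fun v _ => ?_
  have hcond : ∀ w : Fin m → Fin n, v = w ∘ π ↔ w = v ∘ ⇑π⁻¹ := fun w => by
    constructor <;> rintro rfl <;> funext j <;> simp
  simp only [diag_apply, mul_apply, permTensorOp, Ktensor, of_apply, ite_mul, one_mul, zero_mul,
    hcond, Finset.sum_ite_eq', Finset.mem_univ, if_true, Function.comp_apply]

lemma asymCoef_eq_sum_det_submatrix (n m : ℕ) (K : Matrix (Fin n) (Fin n) ℂ) :
    asymCoef n K m = (m.factorial : ℂ)⁻¹ * ∑ v : Fin m → Fin n, (K.submatrix v v).det := by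
  simp only [asymCoef, antisym, smul_mul, trace_smul, Finset.sum_mul, trace_sum,
    trace_permTensorOp_mul_Ktensor, smul_eq_mul, det_apply', submatrix_apply, Finset.mul_sum]
  rw [Finset.sum_comm]
  exact Finset.sum_congr rfl fun v _ =>
    Fintype.sum_equiv (Equiv.inv _) _ _ fun π => by simp [Equiv.Perm.sign_inv]

lemma asymCoef_eq_sumPrincipalMinors (n m : ℕ) (K : Matrix (Fin n) (Fin n) ℂ) :
    asymCoef n K m = K.sumPrincipalMinors m := by
  rw [asymCoef_eq_sum_det_submatrix, sum_det_submatrix_eq_factorial_mul, ← mul_assoc,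
    inv_mul_cancel₀ (Nat.cast_ne_zero.mpr m.factorial_ne_zero), one_mul]

/-- The paper's `t_m`: the fused eigenvalue `t_m^{(K,x)}` for `m < n`, the quantum determinant
for `m = n`. -/
def tEig (n N : ℕ) (η : ℂ) (ξ : Fin N → ℂ) (K : Matrix (Fin n) (Fin n) ℂ) (x : Fin N → ℂ)
    (m : ℕ) (lam : ℂ) : ℂ :=
  if m = n then qdet n N η ξ K lam else tfun n N η ξ K x m lam

def spectralCurveSum (n N : ℕ) (η : ℂ) (ξ : Fin N → ℂ) (K : Matrix (Fin n) (Fin n) ℂ)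
    (x : Fin N → ℂ) (abar : ℂ) (M : ℕ) (lamr : Fin M → ℂ) (lam : ℂ) : ℂ :=
  ∑ b ∈ Finset.range (n + 1), alphaF N η ξ abar b lam * (∏ j, (lam - (b : ℂ) * η - lamr j)) *
    tEig n N η ξ K x (n - b) (lam - (b : ℂ) * η)

def SeparatedNodes (n N : ℕ) (η : ℂ) (ξ : Fin N → ℂ) : Prop :=
  ∀ a b : Fin N, a ≠ b → ∀ k : ℤ, k ≠ 0 → k.natAbs ≤ n → ξ a - ξ b ≠ (k : ℂ) * η

def SolvesSoVSystem (n N : ℕ) (η : ℂ) (ξ : Fin N → ℂ) (K : Matrix (Fin n) (Fin n) ℂ)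
    (x : Fin N → ℂ) : Prop :=
  ∀ a : Fin N, x a * tfun n N η ξ K x (n - 1) (ξ a - η) = qdet n N η ξ K (ξ a)

def SolvesDiscreteBaxter (N : ℕ) (η : ℂ) (ξ : Fin N → ℂ) (abar : ℂ) (x : Fin N → ℂ) (M : ℕ)
    (lamr : Fin M → ℂ) : Prop :=
  ∀ a : Fin N, alphaF N η ξ abar 1 (ξ a) * (∏ j, (ξ a - η - lamr j)) = x a * ∏ j, (ξ a - lamr j)

variable {n N : ℕ} {η : ℂ} {ξ : Fin N → ℂ} {K : Matrix (Fin n) (Fin n) ℂ} {x : Fin N → ℂ}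
  {abar : ℂ}

lemma isPolyOfDegLE_gfun (m : ℕ) (a : Fin N) : IsPolyOfDegLE (gfun N η ξ m a) N 0 :=
  ((lagrange_basis Finset.univ ξ (Finset.mem_univ a)).mul_const _).of_eq (by simp) (zero_mul _)

lemma isPolyOfDegLE_tfun :
    ∀ m, IsPolyOfDegLE (tfun n N η ξ K x m) (m * N) (K.sumPrincipalMinors m)
  | 0 => (const 1).of_eq (by simp) K.sumPrincipalMinors_zero.symm
  | 1 => (((prod_sub Finset.univ ξ).const_mul K.trace).add (sum Finset.univ fun a _ =>
      (lagrange_basis Finset.univ ξ (Finset.mem_univ a)).const_mul (x a))).of_eq (by simp)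
      (by simp [sumPrincipalMinors_one])
  | m + 2 => by
    have hP : IsPolyOfDegLE (fun z => ∏ b, ∏ r ∈ Finset.Icc 1 (m + 1), (z - ξ b - (r : ℂ) * η))
        ((m + 1) * N) 1 :=
      (prod Finset.univ fun b _ => (prod_sub (Finset.Icc 1 (m + 1)) fun r : ℕ => ξ b + r * η).congr
        fun z => Finset.prod_congr rfl fun r _ => by ring).of_eq (by simp [mul_comm]) (by simp)
    have hS : IsPolyOfDegLE (fun z => asymCoef n K (m + 2) * ∏ b, (z - ξ b) +
        ∑ a, gfun N η ξ (m + 1) a z * x a * tfun n N η ξ K x (m + 1) (ξ a - η)) N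
        (asymCoef n K (m + 2) * 1 + ∑ a, 0 * x a * tfun n N η ξ K x (m + 1) (ξ a - η)) :=
      (((prod_sub Finset.univ ξ).of_eq (by simp) rfl).const_mul
        (asymCoef n K (m + 2))).add
        (sum Finset.univ fun a _ =>
          ((isPolyOfDegLE_gfun (m + 1) a).mul_const (x a)).mul_const
            (tfun n N η ξ K x (m + 1) (ξ a - η)))
    exact (hP.mul hS).of_eq (by ring) (by simp [asymCoef_eq_sumPrincipalMinors])

lemma isPolyOfDegLE_alpha1 : IsPolyOfDegLE (alpha1 N η ξ abar) N abar :=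
  (((prod_sub Finset.univ fun a => ξ a - η).congr fun z =>
    Finset.prod_congr rfl fun a _ => by ring).const_mul abar).of_eq (by simp) (mul_one _)

lemma isPolyOfDegLE_alphaF : ∀ b, IsPolyOfDegLE (alphaF N η ξ abar b) (b * N) (-(-abar) ^ b)
  | 0 => (const (-1)).of_eq (by simp) (by simp)
  | j + 1 => ((prod (Finset.range (j + 1)) fun h _ =>
      isPolyOfDegLE_alpha1.comp_sub ((h : ℂ) * η)).const_mul ((-1) ^ j)).of_eq (by simp)
      (by rw [Finset.prod_const, Finset.card_range]; ring)

lemma isPolyOfDegLE_qdet (hn : 1 ≤ n) : IsPolyOfDegLE (qdet n N η ξ K) (n * N) K.det := by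
  have hfactor : ∀ b, IsPolyOfDegLE
      (fun z => (z - ξ b + η) * ∏ m ∈ Finset.Icc 1 (n - 1), (z - ξ b - (m : ℂ) * η)) n 1 := by
    intro b
    refine (((sub_const (ξ b - η)).congr fun z => by ring).mul
      ((prod_sub (Finset.Icc 1 (n - 1)) fun m : ℕ => ξ b + (m : ℂ) * η).congr fun z =>
        Finset.prod_congr rfl fun m _ => by ring)).of_eq (by rw [Nat.card_Icc]; omega) (mul_one _)
  exact ((prod Finset.univ fun b _ => hfactor b).const_mul K.det).of_eq (by simp [mul_comm])
    (by simp)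

lemma isPolyOfDegLE_tEig (hn : 1 ≤ n) (m : ℕ) :
    IsPolyOfDegLE (tEig n N η ξ K x m) (m * N) (K.sumPrincipalMinors m) := by
  unfold tEig
  split_ifs with h
  · rw [h]
    exact (isPolyOfDegLE_qdet hn).of_eq rfl (by simpa using K.sumPrincipalMinors_card.symm)
  · exact isPolyOfDegLE_tfun m

lemma isPolyOfDegLE_spectralCurveSum (hn : 1 ≤ n) (habar : abar ∈ spectrum ℂ K) (M : ℕ)
    (lamr : Fin M → ℂ) :
    IsPolyOfDegLE (spectralCurveSum n N η ξ K x abar M lamr) (n * N + M) 0 := by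
  have hterm : ∀ b ∈ Finset.range (n + 1), IsPolyOfDegLE
      (fun lam => alphaF N η ξ abar b lam * (∏ j, (lam - (b : ℂ) * η - lamr j)) *
        tEig n N η ξ K x (n - b) (lam - (b : ℂ) * η))
      (n * N + M) (-((-abar) ^ b * K.sumPrincipalMinors (n - b))) := by
    intro b hb
    have hb : b ≤ n := Nat.lt_succ_iff.mp (Finset.mem_range.mp hb)
    refine ((isPolyOfDegLE_alphaF b).mul ((prod_sub Finset.univ lamr).comp_sub _)).mul
      ((isPolyOfDegLE_tEig hn (n - b)).comp_sub _) |>.of_eq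
        (by rw [Finset.card_fin]; zify [hb]; ring) (by simp)
  refine (sum _ hterm).of_eq rfl ?_
  have hroot := (mem_spectrum_iff_isRoot_charpoly.mp habar).eq_zero
  have := K.sum_neg_pow_mul_sumPrincipalMinors abar
  simp only [Fintype.card_fin, hroot, mul_zero] at this
  rw [Finset.sum_neg_distrib, this, neg_zero]

lemma alpha1_sub_eta (a : Fin N) : alpha1 N η ξ abar (ξ a - η) = 0 :=
  mul_eq_zero_of_right _ (Finset.prod_eq_zero (Finset.mem_univ a) (by ring))

lemma alphaF_succ (j : ℕ) (lam : ℂ) :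
    alphaF N η ξ abar (j + 1) lam = -alpha1 N η ξ abar (lam - j * η) * alphaF N η ξ abar j lam := by
  cases j with
  | zero => simp [alphaF]
  | succ j =>
    simp only [alphaF, Finset.prod_range_succ _ (j + 1), pow_succ]
    ring

lemma alphaF_one (lam : ℂ) : alphaF N η ξ abar 1 lam = alpha1 N η ξ abar lam := by
  simp [alphaF]

lemma alphaF_eq_zero_of_lt {b i : ℕ} (hib : i < b) {a : Fin N} {lam : ℂ}
    (hlam : lam - i * η = ξ a - η) : alphaF N η ξ abar b lam = 0 := by
  obtain ⟨j, rfl⟩ : ∃ j, b = j + 1 := ⟨b - 1, by omega⟩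
  exact mul_eq_zero_of_right _
    (Finset.prod_eq_zero (Finset.mem_range.mpr hib) (by rw [hlam, alpha1_sub_eta]))

lemma qdet_sub_eta (a : Fin N) : qdet n N η ξ K (ξ a - η) = 0 :=
  mul_eq_zero_of_right _ (Finset.prod_eq_zero (Finset.mem_univ a) (by ring))

lemma tEig_eq_zero {m r : ℕ} (hr : 1 ≤ r) (hrm : r < m) (a : Fin N) :
    tEig n N η ξ K x m (ξ a + r * η) = 0 := by
  unfold tEig
  split_ifs with h
  · exact mul_eq_zero_of_right _ (Finset.prod_eq_zero (Finset.mem_univ a)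
      (mul_eq_zero_of_right _ (Finset.prod_eq_zero (Finset.mem_Icc.mpr ⟨hr, by omega⟩)
        (by ring))))
  · obtain ⟨k, rfl⟩ : ∃ k, m = k + 2 := ⟨m - 2, by omega⟩
    exact mul_eq_zero_of_left (Finset.prod_eq_zero (Finset.mem_univ a)
      (Finset.prod_eq_zero (Finset.mem_Icc.mpr ⟨hr, by omega⟩) (by ring))) _

lemma tfun_one_apply_node (hinj : Function.Injective ξ) (a : Fin N) :
    tfun n N η ξ K x 1 (ξ a) = x a := by
  have h0 : ∏ b, (ξ a - ξ b) = 0 := Finset.prod_eq_zero (Finset.mem_univ a) (sub_self _)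
  simp [tfun, t1fun, Finset.prod_erase_div_sub_eq_ite hinj _ (Finset.mem_univ a), h0]

lemma prod_sub_sub_mul_ne_zero (hη : η ≠ 0) (hsep : SeparatedNodes n N η ξ) {m : ℕ} (hm : m ≤ n)
    (a : Fin N) :
    ∏ b, ∏ r ∈ Finset.Icc 1 m, (ξ a - ξ b - (r : ℂ) * η) ≠ 0 := by
  refine Finset.prod_ne_zero_iff.mpr fun b _ => Finset.prod_ne_zero_iff.mpr fun r hr => ?_
  obtain ⟨hr1, hrm⟩ := Finset.mem_Icc.mp hr
  rw [sub_ne_zero]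
  by_cases hab : a = b
  · subst hab
    rw [sub_self]
    exact (mul_ne_zero (Nat.cast_ne_zero.mpr (by omega)) hη).symm
  · exact_mod_cast hsep a b hab r (by omega) (by omega)

lemma tfun_succ_succ_apply_node (hη : η ≠ 0) (hinj : Function.Injective ξ)
    (hsep : SeparatedNodes n N η ξ)
    {m : ℕ} (hm : m + 1 ≤ n) (a : Fin N) :
    tfun n N η ξ K x (m + 2) (ξ a) = x a * tfun n N η ξ K x (m + 1) (ξ a - η) := by
  have hP := prod_sub_sub_mul_ne_zero hη hsep hm a
  have h0 : ∏ b, (ξ a - ξ b) = 0 := Finset.prod_eq_zero (Finset.mem_univ a) (sub_self _)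
  simp only [tfun, gfun, Finset.prod_erase_div_sub_eq_ite hinj _ (Finset.mem_univ a), h0, ite_mul,
    one_mul, zero_mul, mul_zero, zero_add, Finset.sum_ite_eq', Finset.mem_univ, if_true,
    Finset.prod_inv_distrib]
  linear_combination x a * tfun n N η ξ K x (m + 1) (ξ a - η) * mul_inv_cancel₀ hP

lemma tEig_succ_apply_node (hη : η ≠ 0) (hinj : Function.Injective ξ)
    (hsep : SeparatedNodes n N η ξ) (hx : SolvesSoVSystem n N η ξ K x) {m : ℕ} (hm : m < n)
    (a : Fin N) :
    tEig n N η ξ K x (m + 1) (ξ a) = x a * tEig n N η ξ K x m (ξ a - η) := by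
  rw [tEig, tEig, if_neg hm.ne]
  split_ifs with hmn
  · rw [← hx a, show n - 1 = m by omega]
  · cases m with
    | zero => rw [tfun_one_apply_node hinj, tfun, mul_one]
    | succ m => exact tfun_succ_succ_apply_node hη hinj hsep (by omega) a

lemma spectralCurveSum_sub_eta (M : ℕ) (lamr : Fin M → ℂ) (a : Fin N) :
    spectralCurveSum n N η ξ K x abar M lamr (ξ a - η) = 0 := by
  refine Finset.sum_eq_zero fun b _ => ?_
  cases b with
  | zero => simp [tEig, qdet_sub_eta]
  | succ b =>
    rw [alphaF_eq_zero_of_lt (i := 0) (a := a) (Nat.succ_pos b) (by simp), zero_mul, zero_mul]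

lemma spectralCurveSum_add_mul_eta (hη : η ≠ 0) (hinj : Function.Injective ξ)
    (hsep : SeparatedNodes n N η ξ) (hx : SolvesSoVSystem n N η ξ K x) {M : ℕ} {lamr : Fin M → ℂ}
    (hdisc : SolvesDiscreteBaxter N η ξ abar x M lamr)
    {j : ℕ} (hj : j < n) (a : Fin N) :
    spectralCurveSum n N η ξ K x abar M lamr (ξ a + j * η) = 0 := by
  -- `α_b` vanishes here for `b > j + 1` and `t_{n-b}` for `b < j`
  rw [spectralCurveSum, Finset.sum_eq_add_of_mem j (j + 1)
    (Finset.mem_range.mpr (by omega)) (Finset.mem_range.mpr (by omega)) (by omega)]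
  · have h0 : ξ a + j * η - j * η = ξ a := by ring
    have h1 : ξ a + j * η - ((j + 1 : ℕ) : ℂ) * η = ξ a - η := by push_cast; ring
    have ht := tEig_succ_apply_node (K := K) hη hinj hsep hx (m := n - (j + 1)) (by omega) a
    rw [show n - (j + 1) + 1 = n - j by omega] at ht
    have hd := hdisc a
    rw [alphaF_one] at hd
    rw [h0, h1, ht, alphaF_succ, h0]
    linear_combination (-(alphaF N η ξ abar j (ξ a + j * η)) *
      tEig n N η ξ K x (n - (j + 1)) (ξ a - η)) * hd
  · intro c hc ⟨hcj, hcj1⟩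
    have hcn : c ≤ n := Nat.lt_succ_iff.mp (Finset.mem_range.mp hc)
    rcases lt_or_gt_of_ne hcj with hlt | hgt
    · rw [show ξ a + j * η - c * η = ξ a + ((j - c : ℕ) : ℂ) * η by push_cast [hlt.le]; ring,
        tEig_eq_zero (by omega) (by omega), mul_zero]
    · rw [alphaF_eq_zero_of_lt (i := j + 1) (by omega) (by push_cast; ring), zero_mul, zero_mul]

lemma spectralCurveSum_apply_node (hη : η ≠ 0) (hinj : Function.Injective ξ)
    (hsep : SeparatedNodes n N η ξ) (hx : SolvesSoVSystem n N η ξ K x) {M : ℕ} {lamr : Fin M → ℂ}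
    (hdisc : SolvesDiscreteBaxter N η ξ abar x M lamr)
    {k : ℕ} (hk : k ≤ n) (a : Fin N) :
    spectralCurveSum n N η ξ K x abar M lamr (ξ a + k * η - η) = 0 := by
  cases k with
  | zero => simpa using spectralCurveSum_sub_eta M lamr a
  | succ j =>
    rw [show ξ a + ((j + 1 : ℕ) : ℂ) * η - η = ξ a + j * η by push_cast; ring]
    exact spectralCurveSum_add_mul_eta hη hinj hsep hx hdisc (by omega) a

lemma injective_shifted_nodes (hη : η ≠ 0) (hinj : Function.Injective ξ)
    (hsep : SeparatedNodes n N η ξ) :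
    Function.Injective fun p : Fin N × Fin (n + 1) => ξ p.1 + ((p.2 : ℕ) : ℂ) * η - η := by
  rintro ⟨a, k⟩ ⟨b, l⟩ h
  have hdiff : ξ a - ξ b = (((l : ℕ) - (k : ℕ) : ℤ) : ℂ) * η := by
    push_cast
    linear_combination h
  by_cases hab : a = b
  · subst hab
    have hkl : (((l : ℕ) - (k : ℕ) : ℤ) : ℂ) = 0 := by
      simpa [hη] using hdiff.symm
    have := Int.cast_eq_zero.mp hkl
    exact Prod.ext rfl (Fin.ext (show (k : ℕ) = l by omega))
  · by_cases hkl : (k : ℕ) = l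
    · exact absurd (hinj (sub_eq_zero.mp (by simpa [hkl] using hdiff))) hab
    · exact absurd hdiff (hsep a b hab _ (by omega) (by omega))

theorem sov_implies_spectral_curve_general (n N : ℕ) (hn : 2 ≤ n)
    (η : ℂ) (hη : η ≠ 0) (ξ : Fin N → ℂ) (hinj : Function.Injective ξ)
    (hsep : ∀ a b : Fin N, a ≠ b → ∀ k : ℤ, k ≠ 0 → k.natAbs ≤ n →
      ξ a - ξ b ≠ (k : ℂ) * η)
    (K : Matrix (Fin n) (Fin n) ℂ)
    (abar : ℂ) (habar : abar ∈ spectrum ℂ K)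
    (x : Fin N → ℂ)
    (hx : ∀ a : Fin N,
      x a * tfun n N η ξ K x (n - 1) (ξ a - η) = qdet n N η ξ K (ξ a))
    (M : ℕ) (hM : M ≤ N) (lamr : Fin M → ℂ)
    (hdisc : ∀ a : Fin N,
      alphaF N η ξ abar 1 (ξ a) * (∏ j, (ξ a - η - lamr j)) =
        x a * ∏ j, (ξ a - lamr j)) :
    ∀ lam : ℂ,
      ∑ b ∈ Finset.range (n + 1),
        alphaF N η ξ abar b lam * (∏ j, (lam - (b : ℂ) * η - lamr j)) *
          (if n - b = n then qdet n N η ξ K (lam - (b : ℂ) * η)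
            else tfun n N η ξ K x (n - b) (lam - (b : ℂ) * η)) = 0 :=
  (isPolyOfDegLE_spectralCurveSum (by omega) habar M lamr).eq_zero_of_injective
    (injective_shifted_nodes hη hinj hsep)
    (by rw [Fintype.card_prod, Fintype.card_fin, Fintype.card_fin]; nlinarith)
    fun p => spectralCurveSum_apply_node hη hinj hsep hx hdisc (Nat.lt_succ_iff.mp p.2.2) p.1

/-- the SoV discrete system implies the quantum spectral curve: if `x`
solves the SoV discrete system and the polynomial `φ` (with roots avoiding the
inhomogeneities) satisfies the discrete Baxter relations at the inhomogeneities, then the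
quantum spectral curve functional equation holds identically. -/
theorem sov_implies_spectral_curve (n N : ℕ) (hn : 2 ≤ n) (hN : 1 ≤ N)
    (η : ℂ) (hη : η ≠ 0) (ξ : Fin N → ℂ) (hinj : Function.Injective ξ)
    (hsep : ∀ a b : Fin N, a ≠ b → ∀ k : ℤ, k ≠ 0 → k.natAbs ≤ n →
      ξ a - ξ b ≠ (k : ℂ) * η)
    (K : Matrix (Fin n) (Fin n) ℂ) (hK : IsUnit K.det)
    (abar : ℂ) (habar : abar ∈ spectrum ℂ K)
    (x : Fin N → ℂ)
    (hx : ∀ a : Fin N,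
      x a * tfun n N η ξ K x (n - 1) (ξ a - η) = qdet n N η ξ K (ξ a))
    (M : ℕ) (hM : M ≤ N) (lamr : Fin M → ℂ) (hroots : ∀ j a, lamr j ≠ ξ a)
    (hdisc : ∀ a : Fin N,
      alphaF N η ξ abar 1 (ξ a) * (∏ j, (ξ a - η - lamr j)) =
        x a * ∏ j, (ξ a - lamr j)) :
    ∀ lam : ℂ,
      ∑ b ∈ Finset.range (n + 1),
        alphaF N η ξ abar b lam * (∏ j, (lam - (b : ℂ) * η - lamr j)) *
          (if n - b = n then qdet n N η ξ K (lam - (b : ℂ) * η)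
            else tfun n N η ξ K x (n - b) (lam - (b : ℂ) * η)) = 0 :=
  sov_implies_spectral_curve_general n N hn η hη ξ hinj hsep K abar habar x hx M hM lamr hdisc

end GLnSoV
end
end

section
/- Algebraic Bethe ansatz form of the separate states: assume the SoV basis hypothesis. For λ ∈ ℂ, let 𝔹(λ) be the unique operator on H such that ⟨h| ∘ 𝔹(λ) = [∏_{a=1}^N (λ − ξ_a)^{n−1−h_a} (λ − ξ_a + η)^{h_a}] · ⟨h| for every h ∈ {0,…,n−1}^N. Fix ᾱ ∈ ℂ and set α_1(λ) = ᾱ·∏_{a=1}^N (λ + η − ξ_a). Let M ≤ N, let λ_1,…,λ_M ∈ ℂ with λ_j ≠ ξ_a for all j, a, and set φ(λ) = ∏_{j=1}^M (λ − λ_j). Let |t_0⟩ ∈ H be the unique vector with ⟨h|t_0⟩ = ∏_{a=1}^N α_1(ξ_a)^{h_a}, and let |t⟩ ∈ H be the unique vector with ⟨h|t⟩ = ∏_{a=1}^N α_1(ξ_a)^{h_a} · φ(ξ_a − η)^{h_a} · φ(ξ_a)^{n−1−h_a}, for all h. Then |t⟩ = (−1)^{M·N·(n−1)} · 𝔹(λ_1)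 𝔹(λ_2) ⋯ 𝔹(λ_M) |t_0⟩. -/
open Matrix BigOperators

noncomputable section

/-!
Pairing both sides with the SoV covectors `⟨h|`, which form a basis, reduces the claim to a
scalar identity: `⟨h|` is a common left eigenvector of all `𝔹(λ_j)`, and on each site `a` the
product `φ(ξ_a - η)^{h_a} φ(ξ_a)^{n-1-h_a}` differs from `∏_j 𝔹`-eigenvalue factors only by the
sign `(-1)^{M(n-1)}` coming from `ξ_a - λ_j = -(λ_j - ξ_a)`.
-/

theorem Module.Basis.eq_of_dotProduct_eq {κ ι R : Type*} [CommSemiring R] [Fintype ι]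
    (B : Module.Basis κ R (ι → R)) {v w : ι → R} (h : ∀ k, B k ⬝ᵥ v = B k ⬝ᵥ w) : v = w := by
  have hflip : (dotProductBilin R R (m := ι)).flip v = (dotProductBilin R R).flip w := B.ext h
  exact dotProduct_eq v w fun u => by
    simpa [dotProduct_comm] using LinearMap.congr_fun hflip u

theorem vecMul_list_prod_ofFn_of_vecMul_eq_smul {ι R : Type*} [CommSemiring R] [Fintype ι]
    [DecidableEq ι] {v : ι → R} : ∀ {M : ℕ} {A : Fin M → Matrix ι ι R} {c : Fin M → R},
    (∀ j, v ᵥ* A j = c j • v) → v ᵥ* (List.ofFn A).prod = (∏ j, c j) • v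
  | 0, _, _, _ => by simp
  | M + 1, A, c, hA => by
    rw [List.ofFn_succ, List.prod_cons, ← vecMul_vecMul, hA 0, smul_vecMul,
      vecMul_list_prod_ofFn_of_vecMul_eq_smul fun j => hA j.succ, smul_smul, Fin.prod_univ_succ]

theorem prod_sub_pow_mul_prod_sub_pow {R : Type*} [CommRing R] {M : ℕ} (μ : Fin M → R)
    (x η : R) {k d : ℕ} (hk : k ≤ d) :
    (∏ j, (x - η - μ j)) ^ k * (∏ j, (x - μ j)) ^ (d - k) =
      (-1) ^ (M * d) * ∏ j, (μ j - x) ^ (d - k) * (μ j - x + η) ^ k := by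
  have hneg : ∀ y, ∏ j, (y - μ j) = (-1) ^ M * ∏ j, (μ j - y) := fun y => by
    simpa using Finset.prod_neg (s := Finset.univ) fun j => μ j - y
  have hshift : ∏ j, (μ j - (x - η)) = ∏ j, (μ j - x + η) :=
    Finset.prod_congr rfl fun j _ => by ring
  have hsign : ((-1 : R) ^ M) ^ k * ((-1) ^ M) ^ (d - k) = (-1) ^ (M * d) := by
    rw [← pow_add, Nat.add_sub_cancel' hk, pow_mul]
  rw [hneg, hneg, hshift, Finset.prod_mul_distrib, Finset.prod_pow, Finset.prod_pow, ← hsign]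
  ring

theorem prod_prod_sub_pow_eq_sign_mul {R : Type*} [CommRing R] {M N : ℕ} (μ : Fin M → R)
    (ξ w : Fin N → R) (η : R) {e : Fin N → ℕ} {d : ℕ} (he : ∀ a, e a ≤ d) :
    ∏ a, w a * (∏ j, (ξ a - η - μ j)) ^ e a * (∏ j, (ξ a - μ j)) ^ (d - e a) =
      (-1) ^ (M * N * d) *
        ((∏ j, ∏ a, (μ j - ξ a) ^ (d - e a) * (μ j - ξ a + η) ^ e a) * ∏ a, w a) := by
  calc ∏ a, w a * (∏ j, (ξ a - η - μ j)) ^ e a * (∏ j, (ξ a - μ j)) ^ (d - e a)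
      = ∏ a, (-1) ^ (M * d) * ((∏ j, (μ j - ξ a) ^ (d - e a) * (μ j - ξ a + η) ^ e a) * w a) :=
        Finset.prod_congr rfl fun a _ => by
          rw [mul_assoc, prod_sub_pow_mul_prod_sub_pow μ (ξ a) η (he a)]
          ring
    _ = _ := by
        rw [Finset.prod_mul_distrib, Finset.prod_mul_distrib, Finset.prod_const,
          Finset.card_univ, Fintype.card_fin, ← pow_mul, mul_right_comm, Finset.prod_comm]

namespace GLnSoV

theorem aba_form_of_separate_states_general (n N : ℕ) (η : ℂ)
    (ξ : Fin N → ℂ) (K : Matrix (Fin n) (Fin n) ℂ) (S : (Fin N → Fin n) → ℂ)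
    (hSoV : sovBasisHyp n N η ξ K S)
    (Bop : ℂ → Matrix (Fin N → Fin n) (Fin N → Fin n) ℂ)
    (hB : ∀ (lam : ℂ) (h : Fin N → Fin n),
      sovCovector n N η ξ K S h ᵥ* Bop lam =
        (∏ a, (lam - ξ a) ^ (n - 1 - (h a : ℕ)) * (lam - ξ a + η) ^ (h a : ℕ)) •
          sovCovector n N η ξ K S h)
    (abar : ℂ) (M : ℕ) (lamr : Fin M → ℂ)
    (t0 t : (Fin N → Fin n) → ℂ)
    (ht0 : ∀ h : Fin N → Fin n,
      sovCovector n N η ξ K S h ⬝ᵥ t0 = ∏ a, alpha1 N η ξ abar (ξ a) ^ (h a : ℕ))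
    (ht : ∀ h : Fin N → Fin n,
      sovCovector n N η ξ K S h ⬝ᵥ t =
        ∏ a, alpha1 N η ξ abar (ξ a) ^ (h a : ℕ) *
          (∏ j, (ξ a - η - lamr j)) ^ (h a : ℕ) *
          (∏ j, (ξ a - lamr j)) ^ (n - 1 - (h a : ℕ))) :
    t = ((-1 : ℂ) ^ (M * N * (n - 1))) •
      ((List.ofFn fun j : Fin M => Bop (lamr j)).prod *ᵥ t0) := by
  obtain ⟨B, hBcov⟩ := hSoV
  refine B.eq_of_dotProduct_eq fun h => ?_
  rw [hBcov, dotProduct_smul, dotProduct_mulVec,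
    vecMul_list_prod_ofFn_of_vecMul_eq_smul fun j => hB (lamr j) h, smul_dotProduct, ht0, ht,
    prod_prod_sub_pow_eq_sign_mul lamr ξ _ η fun a => Nat.le_sub_one_of_lt (h a).isLt]
  simp only [smul_eq_mul]

/-- Algebraic Bethe ansatz form of the separate states: the separate state
`|t⟩` is obtained from the reference state `|t₀⟩` by acting with the `𝔹`-operators at the
roots of `φ`. -/
theorem aba_form_of_separate_states (n N : ℕ) (hn : 2 ≤ n) (hN : 1 ≤ N) (η : ℂ)
    (ξ : Fin N → ℂ) (K : Matrix (Fin n) (Fin n) ℂ) (S : (Fin N → Fin n) → ℂ)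
    (hSoV : sovBasisHyp n N η ξ K S)
    (Bop : ℂ → Matrix (Fin N → Fin n) (Fin N → Fin n) ℂ)
    (hB : ∀ (lam : ℂ) (h : Fin N → Fin n),
      sovCovector n N η ξ K S h ᵥ* Bop lam =
        (∏ a, (lam - ξ a) ^ (n - 1 - (h a : ℕ)) * (lam - ξ a + η) ^ (h a : ℕ)) •
          sovCovector n N η ξ K S h)
    (abar : ℂ) (M : ℕ) (hM : M ≤ N) (lamr : Fin M → ℂ) (hroots : ∀ j a, lamr j ≠ ξ a)
    (t0 t : (Fin N → Fin n) → ℂ)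
    (ht0 : ∀ h : Fin N → Fin n,
      sovCovector n N η ξ K S h ⬝ᵥ t0 = ∏ a, alpha1 N η ξ abar (ξ a) ^ (h a : ℕ))
    (ht : ∀ h : Fin N → Fin n,
      sovCovector n N η ξ K S h ⬝ᵥ t =
        ∏ a, alpha1 N η ξ abar (ξ a) ^ (h a : ℕ) *
          (∏ j, (ξ a - η - lamr j)) ^ (h a : ℕ) *
          (∏ j, (ξ a - lamr j)) ^ (n - 1 - (h a : ℕ))) :
    t = ((-1 : ℂ) ^ (M * N * (n - 1))) •
      ((List.ofFn fun j : Fin M => Bop (lamr j)).prod *ᵥ t0) :=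
  aba_form_of_separate_states_general n N η ξ K S hSoV Bop hB abar M lamr t0 t ht0 ht

end GLnSoV
end
end
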